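/- Let n ≥ 2, let a₀, a₁, …, aₙ, b : ℝ → ℝ be differentiable with a₀(t) ≠ 0 for all t, and define X : ℝ × ℝⁿ → ℝⁿ by Xⁱ(t,x) = xⁱ⁺¹ for i = 1,…,n−1 and Xⁿ(t,x) = b(t)/a₀(t) − Σ_{j=1}^{n} (a_{n−j+1}(t)/a₀(t))·xʲ. Then the temporal torsion components R_{(1)1j}^{(i)}(t,x) = (1/2)[ ∂/∂xʲ(∂Xⁱ/∂t)(t,x) − ∂/∂xⁱ(∂Xʲ/∂t)(t,x) ] produced by this system are all zero except those with an index equal to n, and for every i = 1,…,n−1, R_{(1)1n}^{(i)}(t,x) = −R_{(1)1i}^{(n)}(t,x) = (a'_{n−i+1}(t)·a₀(t) − a_{n−i+1}(t)·a₀'(t)) / (2·a₀(t)²), where ' denotes the derivative with respect to t. -/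

import Mathlib

/-!
Only the last component of the system depends on `t`, so every `∂ₜXⁱ` with `i < n` vanishes,
while `∂ₜXⁿ = (b/a₀)' - Σⱼ (a_{n-j+1}/a₀)' xʲ` is affine in `x` with `∂/∂xⁱ(∂ₜXⁿ) = -(a_{n-i+1}/a₀)'`;
the quotient rule gives the stated formula.
-/

/-- Partial derivative of `g : ℝⁿ → ℝ` at `x` in the `j`-th coordinate direction. -/
noncomputable def pd {n : ℕ} (g : (Fin n → ℝ) → ℝ) (x : Fin n → ℝ) (j : Fin n) : ℝ :=
  fderiv ℝ g x (Pi.single j 1)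

/-- The temporal torsion components produced by the first-order ODE system
`dxⁱ/dt = Xⁱ(t,x)`:
`R_{(1)1j}^{(i)}(t,x) = (1/2)[∂/∂xʲ(∂Xⁱ/∂t) - ∂/∂xⁱ(∂Xʲ/∂t)]`. -/
noncomputable def temporalTorsion {n : ℕ} (X : ℝ → (Fin n → ℝ) → Fin n → ℝ)
    (t : ℝ) (x : Fin n → ℝ) (i j : Fin n) : ℝ :=
  (1 / 2) * (pd (fun y => deriv (fun s => X s y i) t) x j
           - pd (fun y => deriv (fun s => X s y j) t) x i)

/-- The first-order system associated to the superior order ODE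
`y⁽ⁿ⁾ = f(t, y, y', …, y⁽ⁿ⁻¹⁾)` via `x¹ = y, …, xⁿ = y⁽ⁿ⁻¹⁾` (0-based indexing):
`Xⁱ(t,x) = xⁱ⁺¹` for `i < n-1` and `Xⁿ⁻¹(t,x) = f(t,x)`. -/
def sodeX (n : ℕ) (f : ℝ → (Fin n → ℝ) → ℝ) : ℝ → (Fin n → ℝ) → Fin n → ℝ :=
  fun t x i => if h : (i : ℕ) + 1 < n then x ⟨(i : ℕ) + 1, h⟩ else f t x

lemma pd_const {n : ℕ} (c : ℝ) (x : Fin n → ℝ) (j : Fin n) :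
    pd (fun _ => c) x j = 0 := by
  simp [pd]

lemma pd_const_sub_sum_mul {n : ℕ} (c : ℝ) (d x : Fin n → ℝ) (i : Fin n) :
    pd (fun y => c - ∑ j, d j * y j) x i = -d i := by
  let L : (Fin n → ℝ) →L[ℝ] ℝ := ∑ j, d j • ContinuousLinearMap.proj j
  have hL : (fun y : Fin n → ℝ => c - ∑ j, d j * y j) = fun y => c - L y := by
    funext y
    simp [L]
  rw [pd, hL, fderiv_const_sub, L.fderiv]
  simp [L, Pi.single_apply]

lemma temporalTorsion_swap {n : ℕ} (X : ℝ → (Fin n → ℝ) → Fin n → ℝ)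
    (t : ℝ) (x : Fin n → ℝ) (i j : Fin n) :
    temporalTorsion X t x j i = -temporalTorsion X t x i j := by
  simp only [temporalTorsion]
  ring

lemma deriv_sub_sum_mul {n : ℕ} {c : ℝ → ℝ} {q : Fin n → ℝ → ℝ} {t : ℝ}
    (hc : DifferentiableAt ℝ c t) (hq : ∀ j, DifferentiableAt ℝ (q j) t) (y : Fin n → ℝ) :
    deriv (fun s => c s - ∑ j, q j s * y j) t = deriv c t - ∑ j, deriv (q j) t * y j := by
  have hqy : ∀ j ∈ Finset.univ, DifferentiableAt ℝ (fun s => q j s * y j) t :=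
    fun j _ => (hq j).mul_const (y j)
  rw [deriv_fun_sub hc (DifferentiableAt.fun_sum hqy), deriv_fun_sum hqy]
  simp only [deriv_mul_const (hq _)]

lemma pd_deriv_sub_sum_mul {n : ℕ} {c : ℝ → ℝ} {q : Fin n → ℝ → ℝ} {t : ℝ}
    (hc : DifferentiableAt ℝ c t) (hq : ∀ j, DifferentiableAt ℝ (q j) t)
    (x : Fin n → ℝ) (i : Fin n) :
    pd (fun y => deriv (fun s => c s - ∑ j, q j s * y j) t) x i = -deriv (q i) t := by
  simp only [deriv_sub_sum_mul hc hq]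
  exact pd_const_sub_sum_mul _ _ x i

section sodeX

variable {n : ℕ} (f : ℝ → (Fin n → ℝ) → ℝ) (t : ℝ) (x : Fin n → ℝ)

lemma pd_deriv_sodeX_of_lt {i : Fin n} (hi : (i : ℕ) + 1 < n) (j : Fin n) :
    pd (fun y => deriv (fun s => sodeX n f s y i) t) x j = 0 := by
  simp only [sodeX, dif_pos hi, deriv_const]
  exact pd_const 0 x j

lemma temporalTorsion_sodeX_of_lt {i j : Fin n} (hi : (i : ℕ) + 1 < n) (hj : (j : ℕ) + 1 < n) :
    temporalTorsion (sodeX n f) t x i j = 0 := by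
  simp [temporalTorsion, pd_deriv_sodeX_of_lt f t x hi, pd_deriv_sodeX_of_lt f t x hj]

lemma temporalTorsion_sodeX_of_lt_of_not_lt {i k : Fin n} (hi : (i : ℕ) + 1 < n)
    (hk : ¬(k : ℕ) + 1 < n) :
    temporalTorsion (sodeX n f) t x i k
      = -(1 / 2) * pd (fun y => deriv (fun s => f s y) t) x i := by
  rw [temporalTorsion, pd_deriv_sodeX_of_lt f t x hi]
  simp only [sodeX, dif_neg hk]
  ring

end sodeX

/-- Indices are 0-based: the paper's `i = 1,…,n-1` is `i + 1 < n` here, its last index `n` is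
`⟨n - 1, _⟩`, and its coefficient `a_{n-i+1}` is `a ⟨n - i, _⟩`. -/
theorem temporal_torsion_of_nonhomogeneous_linear_superior_order_ode
    (n : ℕ) (hn : 2 ≤ n)
    (a : Fin (n + 1) → ℝ → ℝ) (b : ℝ → ℝ)
    (ha : ∀ k : Fin (n + 1), Differentiable ℝ (a k))
    (hb : Differentiable ℝ b)
    (h0 : ∀ t : ℝ, a 0 t ≠ 0) :
    ∀ (t : ℝ) (x : Fin n → ℝ),
      (∀ i j : Fin n, (i : ℕ) + 1 < n → (j : ℕ) + 1 < n →
        temporalTorsion (sodeX n (fun t x => b t / a 0 t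
            - ∑ j : Fin n, (a ⟨n - (j : ℕ), by omega⟩ t / a 0 t) * x j))
          t x i j = 0) ∧
      (∀ i : Fin n, (i : ℕ) + 1 < n →
        temporalTorsion (sodeX n (fun t x => b t / a 0 t
            - ∑ j : Fin n, (a ⟨n - (j : ℕ), by omega⟩ t / a 0 t) * x j))
          t x i ⟨n - 1, by omega⟩
          = (deriv (a ⟨n - (i : ℕ), by omega⟩) t * a 0 t
              - a ⟨n - (i : ℕ), by omega⟩ t * deriv (a 0) t) / (2 * (a 0 t) ^ 2) ∧
        temporalTorsion (sodeX n (fun t x => b t / a 0 t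
            - ∑ j : Fin n, (a ⟨n - (j : ℕ), by omega⟩ t / a 0 t) * x j))
          t x ⟨n - 1, by omega⟩ i
          = -((deriv (a ⟨n - (i : ℕ), by omega⟩) t * a 0 t
              - a ⟨n - (i : ℕ), by omega⟩ t * deriv (a 0) t) / (2 * (a 0 t) ^ 2))) := by
  intro t x
  have hdiv : ∀ {g : ℝ → ℝ}, Differentiable ℝ g → DifferentiableAt ℝ (fun s => g s / a 0 s) t :=
    fun hg => hg.differentiableAt.div (ha 0).differentiableAt (h0 t)
  have hlast : ¬((⟨n - 1, by omega⟩ : Fin n) : ℕ) + 1 < n := by simp only; omega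
  have hmixed : ∀ i : Fin n, (i : ℕ) + 1 < n →
      temporalTorsion (sodeX n (fun t x => b t / a 0 t
          - ∑ j : Fin n, (a ⟨n - (j : ℕ), by omega⟩ t / a 0 t) * x j)) t x i ⟨n - 1, by omega⟩
        = (deriv (a ⟨n - (i : ℕ), by omega⟩) t * a 0 t
            - a ⟨n - (i : ℕ), by omega⟩ t * deriv (a 0) t) / (2 * (a 0 t) ^ 2) := by
    intro i hi
    rw [temporalTorsion_sodeX_of_lt_of_not_lt _ t x hi hlast,
      pd_deriv_sub_sum_mul (hdiv hb) (fun j => hdiv (ha _)),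
      deriv_fun_div (ha _).differentiableAt (ha 0).differentiableAt (h0 t)]
    field_simp [h0 t]
  refine ⟨fun i j hi hj => temporalTorsion_sodeX_of_lt _ t x hi hj, fun i hi => ?_⟩
  exact ⟨hmixed i hi, by rw [temporalTorsion_swap, hmixed i hi]⟩
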